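/- arXiv:math/0503745 — 3 statements merged into one kernel-verified Lean document; each statement's English description precedes it below -/
import Mathlib

section
/- Let q be a prime power with q ≡ 1 (mod 4), and let P_q be the Paley graph on GF(q). Then P_q is (q−1)/2-regular, any two distinct adjacent vertices have exactly (q−5)/4 common neighbors, and any two distinct non-adjacent vertices have exactly (q−1)/4 common neighbors; that is, P_q is a strongly regular graph with parameters (q, (q−1)/2, (q−5)/4, (q−1)/4). More precisely, for any two distinct vertices a, b, the number of common neighbors of a and b equals (q−3)/4 − χ(a−b)/2, where χ is the quadratic residue character of GF(q). -/
open scoped Classical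

/-- The quadratic residue character of a finite field: `χ(0) = 0`, `χ(x) = 1` if `x ≠ 0` is a
square, and `χ(x) = −1` otherwise. -/
noncomputable def quadChar (F : Type*) [Field F] (x : F) : ℝ :=
  if x = 0 then 0 else if IsSquare x then 1 else -1

/-- The Paley graph on a finite field `F`: distinct vertices `a, b` are adjacent iff `a − b`
(or `b − a`) is a nonzero square. When `−1` is a square in `F` (e.g. `|F| ≡ 1 (mod 4)`),
this is exactly: `a ≠ b` and `a − b` is a square. -/
def paleyGraph (F : Type*) [Field F] : SimpleGraph F :=
  SimpleGraph.fromRel fun a b => IsSquare (a - b)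

/-!
Let `χ` be the quadratic character. Since `q ≡ 1 (mod 4)`, `χ(-1) = 1`, so adjacency is just
"`b - a` is a nonzero square", and for `x ≠ 0` the indicator of `x` being a square is
`(χ x + 1) / 2`. Hence `4 · #(common neighbours of a, b)` is the sum of
`(χ(z - a) + 1)(χ(z - b) + 1)` over `z ∉ {a, b}`, which is evaluated with `∑ χ = 0` and the
Jacobi sum identity `∑_z χ(z - a) χ(z - b) = -1`; the degree is counted the same way.
-/

open Finset

section QuadraticChar

variable {F : Type*} [Field F] [Fintype F] [DecidableEq F]

lemma quadChar_eq_quadraticChar (x : F) : quadChar F x = quadraticChar F x := by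
  rw [quadraticChar_apply, quadraticCharFun, quadChar]
  split_ifs <;> simp

lemma sum_quadraticChar_sub (hF : ringChar F ≠ 2) (a : F) :
    ∑ z, quadraticChar F (z - a) = 0 :=
  ((Equiv.subRight a).sum_comp (quadraticChar F)).trans (quadraticChar_sum_zero hF)

/-- The quadratic Jacobi sum `J(χ, χ) = -χ(-1)` after the affine change of variables
`z = b + (a - b) x`. -/
lemma sum_quadraticChar_sub_mul_quadraticChar_sub (hF : ringChar F ≠ 2) {a b : F}
    (hab : a ≠ b) :
    ∑ z, quadraticChar F (z - a) * quadraticChar F (z - b) = -1 := by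
  set χ := quadraticChar F
  have hc : a - b ≠ 0 := sub_ne_zero.mpr hab
  have hJ : ∑ x, χ x * χ (1 - x) = -χ (-1) := by
    simpa only [jacobiSum, (quadraticChar_isQuadratic F).inv] using
      jacobiSum_nontrivial_inv (quadraticChar_ne_one hF)
  have hterm : ∀ x, χ (b + (a - b) * x - a) * χ (b + (a - b) * x - b)
      = χ (-1) * χ (a - b) ^ 2 * (χ x * χ (1 - x)) := by
    intro x
    rw [show b + (a - b) * x - a = -1 * (a - b) * (1 - x) by ring, add_sub_cancel_left]
    simp only [map_mul]
    ring
  calc ∑ z, χ (z - a) * χ (z - b)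
      = ∑ x, χ (b + (a - b) * x - a) * χ (b + (a - b) * x - b) :=
        (Fintype.sum_equiv ((Equiv.mulLeft₀ _ hc).trans (Equiv.addLeft b)) _ _ fun _ => rfl).symm
    _ = -(χ (-1) ^ 2 * χ (a - b) ^ 2) := by
        rw [Fintype.sum_congr _ _ hterm, ← mul_sum, hJ]; ring
    _ = -1 := by
        rw [quadraticChar_sq_one (neg_ne_zero.mpr one_ne_zero), quadraticChar_sq_one hc]; ring

lemma quadraticChar_add_one {x : F} (hx : x ≠ 0) :
    quadraticChar F x + 1 = 2 * if IsSquare x then 1 else 0 := by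
  split_ifs with h
  · rw [(quadraticChar_one_iff_isSquare hx).mpr h]; rfl
  · rw [quadraticChar_neg_one_iff_not_isSquare.mpr h]; rfl

end QuadraticChar

section Paley

variable {F : Type*} [Field F]

lemma paleyGraph_adj_iff (h : IsSquare (-1 : F)) {a b : F} :
    (paleyGraph F).Adj a b ↔ a ≠ b ∧ IsSquare (b - a) := by
  have hsymm : IsSquare (a - b) → IsSquare (b - a) := fun hs => by
    simpa [neg_one_mul] using h.mul hs
  simp only [paleyGraph, SimpleGraph.fromRel_adj]
  exact and_congr_right fun _ => ⟨fun hs => hs.elim hsymm id, Or.inr⟩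

variable [Fintype F]

lemma ringChar_ne_two_of_card_mod_four_eq_one (hq : Fintype.card F % 4 = 1) : ringChar F ≠ 2 := by
  rw [Ne, FiniteField.even_card_iff_char_two]; omega

lemma isSquare_neg_one_of_card_mod_four_eq_one (hq : Fintype.card F % 4 = 1) :
    IsSquare (-1 : F) := by
  rw [FiniteField.isSquare_neg_one_iff]; omega

lemma quadraticChar_sub_comm (h : IsSquare (-1 : F)) (a b : F) :
    quadraticChar F (b - a) = quadraticChar F (a - b) := by
  rw [← neg_sub, ← neg_one_mul, map_mul,
    (quadraticChar_one_iff_isSquare (neg_ne_zero.mpr one_ne_zero)).mpr h, one_mul]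

lemma quadraticChar_sub_eq_ite_paleyGraph_adj (h : IsSquare (-1 : F)) {a b : F} (hab : a ≠ b) :
    quadraticChar F (b - a) = if (paleyGraph F).Adj a b then 1 else -1 := by
  have hba : b - a ≠ 0 := sub_ne_zero.mpr hab.symm
  split_ifs with hadj
  · exact (quadraticChar_one_iff_isSquare hba).mpr ((paleyGraph_adj_iff h).mp hadj).2
  · exact quadraticChar_neg_one_iff_not_isSquare.mpr fun hs =>
      hadj ((paleyGraph_adj_iff h).mpr ⟨hab, hs⟩)

lemma paleyGraph_neighborFinset (h : IsSquare (-1 : F)) (v : F) :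
    (paleyGraph F).neighborFinset v = (univ.erase v).filter fun w => IsSquare (w - v) := by
  ext w
  simp [paleyGraph_adj_iff h, ne_comm]

lemma paleyGraph_commonNeighbors_toFinset (h : IsSquare (-1 : F)) (a b : F) :
    ((paleyGraph F).commonNeighbors a b).toFinset =
      (univ \ {a, b}).filter fun z => IsSquare (z - a) ∧ IsSquare (z - b) := by
  ext z
  simp only [Set.mem_toFinset, SimpleGraph.mem_commonNeighbors, paleyGraph_adj_iff h,
    mem_filter, mem_sdiff, mem_univ, mem_insert, mem_singleton, true_and]
  tauto

lemma two_mul_degree_paleyGraph_add_one (hq : Fintype.card F % 4 = 1) (v : F) :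
    2 * (paleyGraph F).degree v + 1 = Fintype.card F := by
  set χ := quadraticChar F
  have hsum : ∑ w ∈ univ.erase v, (χ (w - v) + 1) = Fintype.card F - 1 := by
    rw [sum_erase_eq_sub (mem_univ v), sum_add_distrib,
      sum_quadraticChar_sub (ringChar_ne_two_of_card_mod_four_eq_one hq), sub_self,
      quadraticChar_zero]
    simp
  have hcount : 2 * ((paleyGraph F).degree v : ℤ) = Fintype.card F - 1 := by
    rw [← SimpleGraph.card_neighborFinset_eq_degree,
      paleyGraph_neighborFinset (isSquare_neg_one_of_card_mod_four_eq_one hq), card_filter,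
      Nat.cast_sum, mul_sum, ← hsum]
    refine sum_congr rfl fun w hw => ?_
    rw [quadraticChar_add_one (sub_ne_zero.mpr (ne_of_mem_erase hw))]
    push_cast; rfl
  omega

lemma four_mul_card_commonNeighbors_paleyGraph (hq : Fintype.card F % 4 = 1) {a b : F}
    (hab : a ≠ b) :
    4 * (Fintype.card ((paleyGraph F).commonNeighbors a b) : ℤ) =
      Fintype.card F - 3 - 2 * quadraticChar F (a - b) := by
  set χ := quadraticChar F
  have h := isSquare_neg_one_of_card_mod_four_eq_one hq
  have hF := ringChar_ne_two_of_card_mod_four_eq_one hq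
  have hsum : ∑ z, (χ (z - a) + 1) * (χ (z - b) + 1) = Fintype.card F - 1 := by
    simp only [add_one_mul, mul_add_one, sum_add_distrib]
    rw [sum_quadraticChar_sub_mul_quadraticChar_sub hF hab, sum_quadraticChar_sub hF,
      sum_quadraticChar_sub hF]
    simp only [sum_const, card_univ, nsmul_one]
    ring
  rw [← Set.toFinset_card, paleyGraph_commonNeighbors_toFinset h, card_filter, Nat.cast_sum,
    mul_sum]
  calc ∑ z ∈ univ \ {a, b},
        4 * ((if IsSquare (z - a) ∧ IsSquare (z - b) then 1 else 0 : ℕ) : ℤ)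
      = ∑ z ∈ univ \ {a, b}, (χ (z - a) + 1) * (χ (z - b) + 1) := by
        refine sum_congr rfl fun z hz => ?_
        simp only [mem_sdiff, mem_univ, mem_insert, mem_singleton, true_and, not_or] at hz
        rw [quadraticChar_add_one (sub_ne_zero.mpr hz.1),
          quadraticChar_add_one (sub_ne_zero.mpr hz.2), mul_mul_mul_comm, ite_zero_mul_ite_zero]
        push_cast; rfl
    _ = Fintype.card F - 3 - 2 * χ (a - b) := by
        rw [sum_sdiff_eq_sub (subset_univ _), sum_pair hab, hsum, sub_self, sub_self,
          quadraticChar_sub_comm h, quadraticChar_zero]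
        ring

lemma card_commonNeighbors_paleyGraph_of_adj (hq : Fintype.card F % 4 = 1) {a b : F}
    (hadj : (paleyGraph F).Adj a b) :
    4 * Fintype.card ((paleyGraph F).commonNeighbors a b) + 5 = Fintype.card F := by
  have h := four_mul_card_commonNeighbors_paleyGraph hq hadj.ne
  rw [← quadraticChar_sub_comm (isSquare_neg_one_of_card_mod_four_eq_one hq),
    quadraticChar_sub_eq_ite_paleyGraph_adj (isSquare_neg_one_of_card_mod_four_eq_one hq) hadj.ne,
    if_pos hadj] at h
  omega

lemma card_commonNeighbors_paleyGraph_of_not_adj (hq : Fintype.card F % 4 = 1) {a b : F}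
    (hab : a ≠ b) (hadj : ¬(paleyGraph F).Adj a b) :
    4 * Fintype.card ((paleyGraph F).commonNeighbors a b) + 1 = Fintype.card F := by
  have h := four_mul_card_commonNeighbors_paleyGraph hq hab
  rw [← quadraticChar_sub_comm (isSquare_neg_one_of_card_mod_four_eq_one hq),
    quadraticChar_sub_eq_ite_paleyGraph_adj (isSquare_neg_one_of_card_mod_four_eq_one hq) hab,
    if_neg hadj] at h
  omega

end Paley

theorem stmt_3_general (q : ℕ) (hq4 : q % 4 = 1)
    (F : Type*) [Field F] [Fintype F] (hF : Fintype.card F = q) :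
    (paleyGraph F).IsSRGWith q ((q - 1) / 2) ((q - 5) / 4) ((q - 1) / 4) ∧
    (∀ v : F, (((paleyGraph F).neighborSet v).ncard : ℝ) = ((q : ℝ) - 1) / 2) ∧
    (∀ a b : F, (paleyGraph F).Adj a b →
      (((paleyGraph F).commonNeighbors a b).ncard : ℝ) = ((q : ℝ) - 5) / 4) ∧
    (∀ a b : F, a ≠ b → ¬ (paleyGraph F).Adj a b →
      (((paleyGraph F).commonNeighbors a b).ncard : ℝ) = ((q : ℝ) - 1) / 4) ∧
    ∀ a b : F, a ≠ b →
      (((paleyGraph F).commonNeighbors a b).ncard : ℝ) =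
        ((q : ℝ) - 3) / 4 - quadChar F (a - b) / 2 := by
  subst hF
  simp only [← Nat.card_coe_set_eq, Nat.card_eq_fintype_card,
    SimpleGraph.card_neighborSet_eq_degree]
  refine ⟨⟨rfl, fun v => ?_, fun a b h => ?_, fun a b hab h => ?_⟩, fun v => ?_, fun a b h => ?_,
    fun a b hab h => ?_, fun a b hab => ?_⟩
  · have := two_mul_degree_paleyGraph_add_one hq4 v; omega
  · have := card_commonNeighbors_paleyGraph_of_adj hq4 h; omega
  · have := card_commonNeighbors_paleyGraph_of_not_adj hq4 hab h; omega
  · rw [← two_mul_degree_paleyGraph_add_one hq4 v]; push_cast; ring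
  · rw [← card_commonNeighbors_paleyGraph_of_adj hq4 h]; push_cast; ring
  · rw [← card_commonNeighbors_paleyGraph_of_not_adj hq4 hab h]; push_cast; ring
  · have h : 4 * (Fintype.card ((paleyGraph F).commonNeighbors a b) : ℝ) =
        Fintype.card F - 3 - 2 * (quadraticChar F (a - b) : ℝ) := by
      exact_mod_cast four_mul_card_commonNeighbors_paleyGraph hq4 hab
    rw [quadChar_eq_quadraticChar]
    linarith

/-- Let `q ≡ 1 (mod 4)` be a prime power and let `P_q` be the Paley graph on `GF(q)`. Then
`P_q` is strongly regular with parameters `(q, (q−1)/2, (q−5)/4, (q−1)/4)`; more precisely,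
for any two distinct vertices `a, b` the number of their common neighbors equals
`(q − 3)/4 − χ(a − b)/2`, where `χ` is the quadratic residue character. -/
theorem stmt_3 (q : ℕ) (hq : ∃ p k : ℕ, p.Prime ∧ 0 < k ∧ q = p ^ k) (hq4 : q % 4 = 1)
    (F : Type*) [Field F] [Fintype F] (hF : Fintype.card F = q) :
    (paleyGraph F).IsSRGWith q ((q - 1) / 2) ((q - 5) / 4) ((q - 1) / 4) ∧
    (∀ v : F, (((paleyGraph F).neighborSet v).ncard : ℝ) = ((q : ℝ) - 1) / 2) ∧
    (∀ a b : F, (paleyGraph F).Adj a b →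
      (((paleyGraph F).commonNeighbors a b).ncard : ℝ) = ((q : ℝ) - 5) / 4) ∧
    (∀ a b : F, a ≠ b → ¬ (paleyGraph F).Adj a b →
      (((paleyGraph F).commonNeighbors a b).ncard : ℝ) = ((q : ℝ) - 1) / 4) ∧
    ∀ a b : F, a ≠ b →
      (((paleyGraph F).commonNeighbors a b).ncard : ℝ) =
        ((q : ℝ) - 3) / 4 - quadChar F (a - b) / 2 :=
  stmt_3_general q hq4 F hF
end

section
/- Let G be an (n,d,λ)-graph with d − λ ≥ 2. Then G is d-edge-connected: for every nonempty proper subset U of the vertex set with |U| ≤ n/2, the number of edges of G with exactly one endpoint in U is at least d. -/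
/-- An `(n,d,λ)`-graph: a `d`-regular graph on `n` vertices all of whose adjacency-matrix
eigenvalues, except the largest one `λ₁ = d`, are at most `lam` in absolute value. -/
def IsNDL {V : Type*} [Fintype V] [DecidableEq V] (G : SimpleGraph V) [DecidableRel G.Adj]
    (n d : ℕ) (lam : ℝ) : Prop :=
  Fintype.card V = n ∧ G.IsRegularOfDegree d ∧
    ∃ (hA : (G.adjMatrix ℝ).IsHermitian) (i₀ : V),
      hA.eigenvalues i₀ = (d : ℝ) ∧ ∀ i : V, i ≠ i₀ → |hA.eigenvalues i| ≤ lam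

/-- `eCount G U W` is the number of edges of `G` with one endpoint in `U` and the other in `W`
(for disjoint `U, W`, this is exactly the number of such edges). -/
def eCount {V : Type*} [DecidableEq V] (G : SimpleGraph V) [DecidableRel G.Adj]
    (U W : Finset V) : ℕ :=
  ((U ×ˢ W).filter fun p => G.Adj p.1 p.2).card

/-!
A set `U` with `|U| ≤ d` already has `e(U, Uᶜ) ≥ |U| (d + 1 - |U|) ≥ d`, since each vertex of `U`
has at most `|U| - 1` neighbours inside `U`. For larger `U`, write `k = |U|`, `m = |Uᶜ|` and
apply the spectral bound to `x = m·1_U - k·1_{Uᶜ}`. It is orthogonal to the all-ones vector,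
hence to the eigenvector of the simple eigenvalue `d`, so `xᵀAx ≤ λ‖x‖²`, which unfolds to
`(d - λ) k m ≤ n e(U, Uᶜ)`. With `d - λ ≥ 2` and `m ≥ k ≥ d + 1` this forces `e(U, Uᶜ) > d`.
-/

open Finset Matrix

section Indicator

variable {V R : Type*} [Fintype V] [NonAssocSemiring R]

theorem indicator_one_dotProduct (U : Finset V) (x : V → R) :
    (U : Set V).indicator 1 ⬝ᵥ x = ∑ v ∈ U, x v := by
  classical
  simp [dotProduct, Set.indicator_apply, sum_ite_mem]

theorem indicator_one_dotProduct_indicator_one [DecidableEq V] (U W : Finset V) :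
    (U : Set V).indicator 1 ⬝ᵥ (W : Set V).indicator (1 : V → R) = #(U ∩ W) := by
  rw [indicator_one_dotProduct]
  simp [Set.indicator_apply]

end Indicator

theorem Matrix.IsSymm.dotProduct_mulVec_comm {ι R : Type*} [Fintype ι] [CommSemiring R]
    {A : Matrix ι ι R} (hA : A.IsSymm) (x y : ι → R) :
    x ⬝ᵥ (A *ᵥ y) = y ⬝ᵥ (A *ᵥ x) := by
  simpa only [hA.eq] using dotProduct_transpose_mulVec A x y

namespace Matrix.IsHermitian

variable {ι : Type*} [Fintype ι] [DecidableEq ι] {A : Matrix ι ι ℝ} (hA : A.IsHermitian)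

theorem dotProduct_eq_sum_eigenvectorBasis (x y : ι → ℝ) :
    x ⬝ᵥ y = ∑ i, (⇑(hA.eigenvectorBasis i) ⬝ᵥ x) * (⇑(hA.eigenvectorBasis i) ⬝ᵥ y) := by
  have := hA.eigenvectorBasis.sum_inner_mul_inner (WithLp.toLp 2 x) (WithLp.toLp 2 y)
  simp only [EuclideanSpace.inner_eq_star_dotProduct, star_trivial] at this
  simpa [dotProduct_comm] using this.symm

theorem eigenvectorBasis_dotProduct_mulVec (i : ι) (x : ι → ℝ) :
    ⇑(hA.eigenvectorBasis i) ⬝ᵥ (A *ᵥ x) =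
      hA.eigenvalues i * (⇑(hA.eigenvectorBasis i) ⬝ᵥ x) := by
  rw [(isHermitian_iff_isSymm.mp hA).dotProduct_mulVec_comm, hA.mulVec_eigenvectorBasis,
    dotProduct_smul, smul_eq_mul, dotProduct_comm]

theorem eigenvectorBasis_dotProduct_eq_zero_of_mulVec_eq_smul {v : ι → ℝ} {r : ℝ}
    (hv : A *ᵥ v = r • v) {i : ι} (hi : hA.eigenvalues i ≠ r) :
    ⇑(hA.eigenvectorBasis i) ⬝ᵥ v = 0 := by
  have h := hA.eigenvectorBasis_dotProduct_mulVec i v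
  rw [hv, dotProduct_smul, smul_eq_mul] at h
  exact (mul_eq_mul_right_iff.mp h).resolve_left (Ne.symm hi)

theorem eigenvectorBasis_dotProduct_eq_zero_of_dotProduct_eq_zero {v x : ι → ℝ} {i₀ : ι}
    (hv : A *ᵥ v = hA.eigenvalues i₀ • v) (hv0 : v ≠ 0)
    (hsimple : ∀ i, i ≠ i₀ → hA.eigenvalues i ≠ hA.eigenvalues i₀) (hx : v ⬝ᵥ x = 0) :
    ⇑(hA.eigenvectorBasis i₀) ⬝ᵥ x = 0 := by
  have hsingle (y : ι → ℝ) :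
      v ⬝ᵥ y = (⇑(hA.eigenvectorBasis i₀) ⬝ᵥ v) * (⇑(hA.eigenvectorBasis i₀) ⬝ᵥ y) := by
    rw [hA.dotProduct_eq_sum_eigenvectorBasis]
    refine sum_eq_single i₀ (fun i _ hi => ?_) (by simp)
    rw [hA.eigenvectorBasis_dotProduct_eq_zero_of_mulVec_eq_smul hv (hsimple i hi), zero_mul]
  have hv_coord : ⇑(hA.eigenvectorBasis i₀) ⬝ᵥ v ≠ 0 := fun h =>
    hv0 (dotProduct_self_eq_zero.mp (by rw [hsingle, h, zero_mul]))
  rw [hsingle, mul_eq_zero] at hx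
  exact hx.resolve_left hv_coord

theorem dotProduct_mulVec_le_of_eigenvectorBasis_dotProduct_eq_zero {x : ι → ℝ} {i₀ : ι}
    {lam : ℝ} (hx : ⇑(hA.eigenvectorBasis i₀) ⬝ᵥ x = 0)
    (hlam : ∀ i, i ≠ i₀ → hA.eigenvalues i ≤ lam) :
    x ⬝ᵥ (A *ᵥ x) ≤ lam * (x ⬝ᵥ x) := by
  simp only [hA.dotProduct_eq_sum_eigenvectorBasis x, eigenvectorBasis_dotProduct_mulVec,
    mul_sum]
  refine sum_le_sum fun i _ => ?_
  obtain rfl | hi := eq_or_ne i i₀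
  · simp [hx]
  · nlinarith [hlam i hi, mul_self_nonneg (⇑(hA.eigenvectorBasis i) ⬝ᵥ x)]

end Matrix.IsHermitian

section eCount

variable {V : Type*} [DecidableEq V] (G : SimpleGraph V) [DecidableRel G.Adj]

theorem eCount_self_add_card_le (U : Finset V) : eCount G U U + #U ≤ #U * #U := by
  have hsub : (U ×ˢ U).filter (fun p => G.Adj p.1 p.2) ⊆ U.offDiag := fun p hp => by
    simp only [mem_filter, mem_product] at hp
    exact mem_offDiag.2 ⟨hp.1.1, hp.1.2, hp.2.ne⟩
  have h := card_le_card hsub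
  rw [offDiag_card] at h
  have : #U ≤ #U * #U := Nat.le_mul_self _
  unfold eCount
  omega

variable [Fintype V]

theorem eCount_eq_indicator_dotProduct_mulVec (U W : Finset V) :
    (eCount G U W : ℝ) =
      (U : Set V).indicator 1 ⬝ᵥ (G.adjMatrix ℝ *ᵥ (W : Set V).indicator 1) := by
  rw [indicator_one_dotProduct, eCount, card_filter, sum_product]
  push_cast
  refine sum_congr rfl fun v _ => ?_
  simp [mulVec, dotProduct, Set.indicator_apply, sum_ite_mem]

theorem eCount_comm (U W : Finset V) : eCount G U W = eCount G W U := by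
  have h := G.isSymm_adjMatrix.dotProduct_mulVec_comm
    ((U : Set V).indicator (1 : V → ℝ)) ((W : Set V).indicator 1)
  rw [← eCount_eq_indicator_dotProduct_mulVec, ← eCount_eq_indicator_dotProduct_mulVec] at h
  exact_mod_cast h

end eCount

namespace SimpleGraph.IsRegularOfDegree

variable {V : Type*} [Fintype V] {G : SimpleGraph V} [DecidableRel G.Adj] {d : ℕ}

theorem adjMatrix_mulVec_one (hreg : G.IsRegularOfDegree d) :
    G.adjMatrix ℝ *ᵥ 1 = (d : ℝ) • 1 := by
  ext v
  simpa using adjMatrix_mulVec_const_apply_of_regular (a := (1 : ℝ)) hreg (v := v)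

variable [DecidableEq V]

theorem eCount_add_eCount_compl (hreg : G.IsRegularOfDegree d) (U : Finset V) :
    eCount G U U + eCount G U Uᶜ = #U * d := by
  have hone : (U : Set V).indicator 1 + ((Uᶜ : Finset V) : Set V).indicator 1 = (1 : V → ℝ) := by
    simp
  have h : ((eCount G U U + eCount G U Uᶜ : ℕ) : ℝ) = #U * d := by
    rw [Nat.cast_add, eCount_eq_indicator_dotProduct_mulVec, eCount_eq_indicator_dotProduct_mulVec,
      ← dotProduct_add, ← mulVec_add, hone, hreg.adjMatrix_mulVec_one, dotProduct_smul,
      indicator_one_dotProduct]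
    simp [mul_comm]
  exact_mod_cast h

theorem le_eCount_compl_of_card_le (hreg : G.IsRegularOfDegree d) {U : Finset V}
    (hU : U.Nonempty) (hUd : #U ≤ d) : d ≤ eCount G U Uᶜ := by
  have hsplit := hreg.eCount_add_eCount_compl U
  have hself := eCount_self_add_card_le G U
  have hk : 1 ≤ #U := hU.card_pos
  nlinarith

theorem sub_mul_card_mul_card_compl_le_mul_eCount (hreg : G.IsRegularOfDegree d)
    (hA : (G.adjMatrix ℝ).IsHermitian) {i₀ : V} (hi₀ : hA.eigenvalues i₀ = d) {lam : ℝ}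
    (hlam : ∀ i, i ≠ i₀ → hA.eigenvalues i ≤ lam) (hlamd : lam < d) (U : Finset V) :
    (d - lam) * (#U * #Uᶜ) ≤ Fintype.card V * eCount G U Uᶜ := by
  have hsplit : (eCount G U U + eCount G U Uᶜ : ℝ) = #U * d := by
    exact_mod_cast hreg.eCount_add_eCount_compl U
  have hsplit_compl : (eCount G Uᶜ Uᶜ + eCount G U Uᶜ : ℝ) = #Uᶜ * d := by
    have := hreg.eCount_add_eCount_compl Uᶜ
    rw [compl_compl, eCount_comm G Uᶜ U] at this
    exact_mod_cast this
  set a : V → ℝ := (U : Set V).indicator 1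
  set b : V → ℝ := ((Uᶜ : Finset V) : Set V).indicator 1
  set k : ℝ := (#U : ℝ)
  set m : ℝ := (#Uᶜ : ℝ)
  have haa : a ⬝ᵥ a = k := (indicator_one_dotProduct_indicator_one U U).trans (by rw [inter_self])
  have hbb : b ⬝ᵥ b = m :=
    (indicator_one_dotProduct_indicator_one Uᶜ Uᶜ).trans (by rw [inter_self])
  have hab : a ⬝ᵥ b = 0 := (indicator_one_dotProduct_indicator_one U Uᶜ).trans (by simp)
  set x := m • a - k • b
  have hperp : ⇑(hA.eigenvectorBasis i₀) ⬝ᵥ x = 0 := by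
    refine hA.eigenvectorBasis_dotProduct_eq_zero_of_dotProduct_eq_zero (v := 1)
      (by rw [hreg.adjMatrix_mulVec_one, hi₀]) (fun h => one_ne_zero (congrFun h i₀))
      (fun i hi => ((hlam i hi).trans_lt (hi₀ ▸ hlamd)).ne) ?_
    have hone : a + b = 1 := by simp [a, b]
    simp only [x, ← hone, dotProduct_sub, add_dotProduct, dotProduct_smul, haa, hbb, hab,
      dotProduct_comm b a, smul_eq_mul]
    ring
  have hquad := hA.dotProduct_mulVec_le_of_eigenvectorBasis_dotProduct_eq_zero hperp hlam
  simp only [x, mulVec_sub, mulVec_smul, dotProduct_sub, sub_dotProduct, dotProduct_smul,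
    smul_dotProduct, smul_eq_mul, dotProduct_comm b a, haa, hbb, hab, a, b,
    ← eCount_eq_indicator_dotProduct_mulVec, eCount_comm G Uᶜ U] at hquad
  have hn : (Fintype.card V : ℝ) = k + m := by
    rw [← card_add_card_compl U, Nat.cast_add]
  have hkm : 0 < k + m := hn ▸ Nat.cast_pos.mpr (Fintype.card_pos_iff.mpr ⟨i₀⟩)
  have hfactored : (k + m) * ((d - lam) * (k * m) - (k + m) * eCount G U Uᶜ) ≤ 0 := by
    linear_combination hquad - m ^ 2 * hsplit - k ^ 2 * hsplit_compl
  rw [hn]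
  linarith [nonpos_of_mul_nonpos_right hfactored hkm]

end SimpleGraph.IsRegularOfDegree

/-- Let `G` be an `(n,d,λ)`-graph with `d − λ ≥ 2`. Then `G` is `d`-edge-connected: for every
nonempty proper subset `U` of the vertex set with `|U| ≤ n/2`, the number of edges of `G` with
exactly one endpoint in `U` is at least `d`. -/
theorem stmt_6 {V : Type*} [Fintype V] [DecidableEq V] (G : SimpleGraph V)
    [DecidableRel G.Adj] (n d : ℕ) (lam : ℝ)
    (h : IsNDL G n d lam) (hdl : 2 ≤ (d : ℝ) - lam) :
    ∀ U : Finset V, U.Nonempty → U ≠ Finset.univ → 2 * U.card ≤ n →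
      d ≤ eCount G U Uᶜ := by
  obtain ⟨rfl, hreg, hA, i₀, hi₀, hlam⟩ := h
  intro U hU _ hUn
  rcases le_or_gt #U d with hUd | hUd
  · exact hreg.le_eCount_compl_of_card_le hU hUd
  have hbound := hreg.sub_mul_card_mul_card_compl_le_mul_eCount hA hi₀
    (fun i hi => (le_abs_self _).trans (hlam i hi)) (by linarith) U
  have hcard : #U + #Uᶜ = Fintype.card V := card_add_card_compl U
  rw [← hcard, Nat.cast_add] at hbound
  have hkm : (#U : ℝ) ≤ #Uᶜ := by exact_mod_cast (by omega : #U ≤ #Uᶜ)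
  have hk : (d : ℝ) + 1 ≤ #U := by exact_mod_cast hUd
  suffices (d : ℝ) < eCount G U Uᶜ by exact_mod_cast this.le
  nlinarith [mul_le_mul_of_nonneg_right hdl (by positivity : (0 : ℝ) ≤ #U * #Uᶜ)]
end

section
/- Let G be an (n,d,λ)-graph with λ > 0. Then the chromatic number of G satisfies χ(G) ≥ 1 + d/λ. -/
open Matrix Finset
open scoped ComplexOrder

namespace Matrix

variable {n 𝕜 : Type*} [Fintype n] [DecidableEq n] [RCLike 𝕜]

theorem IsHermitian.posSemidef_add_algebraMap {A : Matrix n n 𝕜} (hA : A.IsHermitian) {c : ℝ}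
    (hc : ∀ i, -c ≤ hA.eigenvalues i) : (A + algebraMap ℝ (Matrix n n 𝕜) c).PosSemidef := by
  have hB : (A + algebraMap ℝ (Matrix n n 𝕜) c).IsHermitian :=
    hA.add (by simp [Algebra.algebraMap_eq_smul_one, IsHermitian, conjTranspose_smul])
  refine hB.posSemidef_iff_eigenvalues_nonneg.mpr fun i => ?_
  have hmem := hB.eigenvalues_mem_spectrum_real i
  rw [← spectrum.add_singleton_eq, hA.spectrum_real_eq_range_eigenvalues] at hmem
  obtain ⟨_, ⟨j, rfl⟩, _, rfl, hj⟩ := hmem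
  rw [Pi.zero_apply, ← hj]
  linarith [hc j]

theorem IsHermitian.neg_mul_dotProduct_self_le {A : Matrix n n ℝ} (hA : A.IsHermitian) {c : ℝ}
    (hc : ∀ i, -c ≤ hA.eigenvalues i) (x : n → ℝ) : -c * (x ⬝ᵥ x) ≤ x ⬝ᵥ A *ᵥ x := by
  have := (hA.posSemidef_add_algebraMap hc).dotProduct_mulVec_nonneg x
  simp only [Algebra.algebraMap_eq_smul_one, add_mulVec, smul_mulVec, one_mulVec, dotProduct_add,
    dotProduct_smul, smul_eq_mul, star_trivial] at this
  linarith

end Matrix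

namespace SimpleGraph

variable {V : Type*} [Fintype V] {G : SimpleGraph V}

theorem IsRegularOfDegree.adjMatrix_mulVec_one_s12 [DecidableRel G.Adj] {d : ℕ}
    (hG : G.IsRegularOfDegree d) : G.adjMatrix ℝ *ᵥ 1 = (d : ℝ) • 1 := by
  ext v
  simp [hG v]

theorem IsRegularOfDegree.one_dotProduct_adjMatrix_mulVec [DecidableRel G.Adj] {d : ℕ}
    (hG : G.IsRegularOfDegree d) (x : V → ℝ) : 1 ⬝ᵥ G.adjMatrix ℝ *ᵥ x = d * (1 ⬝ᵥ x) := by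
  rw [dotProduct_mulVec, ← mulVec_transpose, transpose_adjMatrix, hG.adjMatrix_mulVec_one_s12,
    smul_dotProduct, smul_eq_mul]

theorem IsRegularOfDegree.mul_card_le_of_isIndepSet [DecidableRel G.Adj] {d : ℕ}
    (hG : G.IsRegularOfDegree d) {lam : ℝ} (hlam : 0 ≤ lam)
    (hA : ∀ x : V → ℝ, -lam * (x ⬝ᵥ x) ≤ x ⬝ᵥ G.adjMatrix ℝ *ᵥ x)
    {s : Finset V} (hs : G.IsIndepSet s) : (d + lam) * #s ≤ lam * Fintype.card V := by
  classical
  set x : V → ℝ := fun v => if v ∈ s then 1 else 0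
  set n : ℝ := (Fintype.card V : ℝ)
  have hx1 : x ⬝ᵥ 1 = #s := by simp [x, dotProduct]
  have hxx : x ⬝ᵥ x = #s := by simp [x, dotProduct]
  have h11 : (1 : V → ℝ) ⬝ᵥ 1 = n := by simp [n, dotProduct]
  have hxAx : x ⬝ᵥ G.adjMatrix ℝ *ᵥ x = 0 := by
    simp only [dotProduct_mulVec_adjMatrix]
    refine sum_eq_zero fun u _ => sum_eq_zero fun v _ => ?_
    split_ifs with hadj
    · by_cases hu : u ∈ s
      · exact mul_eq_zero_of_right _ (if_neg fun hv => hs hu hv hadj.ne hadj)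
      · exact mul_eq_zero_of_left (if_neg hu) _
    · rfl
  have key := hA (n • x - (#s : ℝ) • 1)
  simp only [mulVec_sub, mulVec_smul, hG.adjMatrix_mulVec_one_s12, dotProduct_sub, sub_dotProduct,
    dotProduct_smul, smul_dotProduct, hG.one_dotProduct_adjMatrix_mulVec, hxAx, hx1, hxx, h11,
    dotProduct_comm 1 x, smul_eq_mul] at key
  have hprod : 0 ≤ n * #s * (lam * n - (d + lam) * #s) := by linear_combination key
  rcases (#s).eq_zero_or_pos with hs0 | hspos
  · simp only [hs0, CharP.cast_eq_zero, mul_zero]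
    positivity
  · have hn : 0 < n := by
      simp only [n]
      exact_mod_cast hspos.trans_le (card_le_univ s)
    have := (mul_nonneg_iff_of_pos_left (by positivity)).mp hprod
    linarith

theorem Coloring.mul_card_le_of_forall_isIndepSet {α : Type*} [Fintype α] (C : G.Coloring α)
    {c m : ℝ} (h : ∀ s : Finset V, G.IsIndepSet s → c * #s ≤ m) :
    c * Fintype.card V ≤ Fintype.card α * m := by
  classical
  have hclass (a : α) : G.IsIndepSet (univ.filter (C · = a) : Finset V) := by
    simpa [Coloring.colorClass, Set.ext_iff] using C.isIndepSet_colorClass a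
  calc c * Fintype.card V = ∑ a : α, c * #(univ.filter (C · = a)) := by
        rw [← mul_sum, ← Nat.cast_sum, ← card_eq_sum_card_fiberwise fun v _ => mem_univ (C v),
          card_univ]
    _ ≤ ∑ _a : α, m := sum_le_sum fun a _ => h _ (hclass a)
    _ = Fintype.card α * m := by simp

end SimpleGraph

/-- Let `G` be an `(n,d,λ)`-graph with `λ > 0`. Then the chromatic number of `G` is at least
`1 + d/λ`: every proper coloring uses at least `1 + d/λ` colors. -/
theorem stmt_12 {V : Type*} [Fintype V] [DecidableEq V] (G : SimpleGraph V)
    [DecidableRel G.Adj] (n d : ℕ) (lam : ℝ)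
    (h : IsNDL G n d lam) (hl : 0 < lam) :
    ∀ k : ℕ, G.Colorable k → 1 + (d : ℝ) / lam ≤ k := by
  rintro k ⟨C⟩
  obtain ⟨-, hreg, hA, i₀, hi₀, hbound⟩ := h
  have hev (i : V) : -lam ≤ hA.eigenvalues i := by
    obtain rfl | hi := eq_or_ne i i₀
    · rw [hi₀]; linarith [d.cast_nonneg (α := ℝ)]
    · exact neg_le_of_abs_le (hbound i hi)
  have hcard := C.mul_card_le_of_forall_isIndepSet fun s hs =>
    hreg.mul_card_le_of_isIndepSet hl.le (hA.neg_mul_dotProduct_self_le hev) hs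
  have hV : (0 : ℝ) < Fintype.card V := by exact_mod_cast Fintype.card_pos_iff.mpr ⟨i₀⟩
  rw [Fintype.card_fin, ← mul_assoc] at hcard
  have hdk : d + lam ≤ k * lam := le_of_mul_le_mul_right hcard hV
  rw [add_comm, div_add_one hl.ne', div_le_iff₀ hl]
  linarith
end
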